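/- arXiv:2101.11571 — 2 statements merged into one kernel-verified Lean document; each statement's English description precedes it below -/
import Mathlib

section
/- For all integers d ≥ 2 and 1 ≤ r ≤ n, the equality (n+1)·binom(n,r)·d^r·(d-1)^{n-r} = (n+1)·(d-1)^n·(r+1)·((n+1)(d-1)^n - 1)^r holds if and only if r = 1 and d = 2. -/
/-!
Put `e = d - 1`, so `δ = (n + 1) e ^ n`. Cancelling `n + 1`, the mixed degree is
`C(n, r) d ^ r e ^ (n - r)` and the iterated one is `e ^ n (r + 1) (δ - 1) ^ r`. Since `d ≤ 2e`,
`r! C(n, r) ≤ n ^ r`, `2 ^ r ≤ 2 r!` and `n ≤ δ - 1`, the chain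
`C(n, r) d ^ r e ^ (n - r) ≤ C(n, r) 2 ^ r e ^ n ≤ 2 n ^ r e ^ n`
  `≤ (r + 1) n ^ r e ^ n ≤ e ^ n (r + 1) (δ - 1) ^ r`
holds. Its first step is strict for `d ≥ 3` and its third for `r ≥ 2`, while for `r = 1`,
`d = 2` both degrees equal `2n(n + 1)`.
-/

open Nat

def discrDegree (d n : ℕ) : ℕ := (n + 1) * (d - 1) ^ n

def mixedDiscrDegree (d n r : ℕ) : ℕ := (n + 1) * n.choose r * d ^ r * (d - 1) ^ (n - r)

def iteratedDiscrDegree (d n r : ℕ) : ℕ :=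
  discrDegree d n * (r + 1) * (discrDegree d n - 1) ^ r

theorem Nat.two_pow_le_two_mul_factorial (r : ℕ) : 2 ^ r ≤ 2 * r ! := by
  cases r with
  | zero => simp
  | succ k =>
    have h : 1 ! * 2 ^ k ≤ (1 + k)! := factorial_mul_pow_le_factorial
    rw [pow_succ, mul_comm, add_comm k 1]
    simpa using h

theorem Nat.choose_mul_two_pow_le (n r : ℕ) : n.choose r * 2 ^ r ≤ 2 * n ^ r := by
  have hchoose : r ! * n.choose r ≤ n ^ r :=
    descFactorial_eq_factorial_mul_choose n r ▸ descFactorial_le_pow n r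
  refine le_of_mul_le_mul_right ?_ (factorial_pos r)
  calc n.choose r * 2 ^ r * r ! = r ! * n.choose r * 2 ^ r := by ring
    _ ≤ n ^ r * (2 * r !) := Nat.mul_le_mul hchoose (two_pow_le_two_mul_factorial r)
    _ = 2 * n ^ r * r ! := by ring

theorem Nat.pow_mul_sub_one_pow_le {d r n : ℕ} (hd : 2 ≤ d) (hrn : r ≤ n) :
    d ^ r * (d - 1) ^ (n - r) ≤ 2 ^ r * (d - 1) ^ n := by
  rw [← Nat.add_sub_cancel' hrn, pow_add, Nat.add_sub_cancel_left, ← mul_assoc, ← mul_pow]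
  exact Nat.mul_le_mul_right _ (Nat.pow_le_pow_left (by omega) r)

theorem Nat.pow_mul_sub_one_pow_lt {d r n : ℕ} (hd : 3 ≤ d) (hr : 1 ≤ r) (hrn : r ≤ n) :
    d ^ r * (d - 1) ^ (n - r) < 2 ^ r * (d - 1) ^ n := by
  rw [← Nat.add_sub_cancel' hrn, pow_add, Nat.add_sub_cancel_left, ← mul_assoc, ← mul_pow]
  exact Nat.mul_lt_mul_of_pos_right (Nat.pow_lt_pow_left (by omega) (by omega))
    (Nat.pow_pos (by omega))

theorem le_discrDegree_sub_one {d : ℕ} (hd : 2 ≤ d) (n : ℕ) : n ≤ discrDegree d n - 1 := by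
  have : 1 ≤ (d - 1) ^ n := Nat.one_le_pow _ _ (by omega)
  have : n + 1 ≤ discrDegree d n := Nat.le_mul_of_pos_right _ this
  omega

theorem choose_mul_pow_mul_sub_one_pow_lt {d n r : ℕ} (hd : 2 ≤ d) (hr : 1 ≤ r)
    (hrn : r ≤ n) (hne : ¬(r = 1 ∧ d = 2)) :
    n.choose r * (d ^ r * (d - 1) ^ (n - r)) <
      (d - 1) ^ n * (r + 1) * (discrDegree d n - 1) ^ r := by
  have hstep₁ : n.choose r * (d ^ r * (d - 1) ^ (n - r)) ≤ n.choose r * (2 ^ r * (d - 1) ^ n) :=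
    Nat.mul_le_mul_left _ (pow_mul_sub_one_pow_le hd hrn)
  have hstep₂ : n.choose r * (2 ^ r * (d - 1) ^ n) ≤ 2 * n ^ r * (d - 1) ^ n := by
    rw [← mul_assoc]
    exact Nat.mul_le_mul_right _ (choose_mul_two_pow_le n r)
  have hstep₃ : 2 * n ^ r * (d - 1) ^ n ≤ (r + 1) * n ^ r * (d - 1) ^ n :=
    Nat.mul_le_mul_right _ (Nat.mul_le_mul_right _ (by omega))
  have hstep₄ :
      (r + 1) * n ^ r * (d - 1) ^ n ≤ (d - 1) ^ n * (r + 1) * (discrDegree d n - 1) ^ r :=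
    calc (r + 1) * n ^ r * (d - 1) ^ n = (d - 1) ^ n * (r + 1) * n ^ r := by ring
      _ ≤ _ := Nat.mul_le_mul_left _ (Nat.pow_le_pow_left (le_discrDegree_sub_one hd n) r)
  rcases not_and_or.mp hne with hr_ne | hd_ne
  · have hpos : 0 < n ^ r * (d - 1) ^ n :=
      Nat.mul_pos (Nat.pow_pos (by omega)) (Nat.pow_pos (by omega))
    have hstep₃_lt : 2 * n ^ r * (d - 1) ^ n < (r + 1) * n ^ r * (d - 1) ^ n := by
      rw [mul_assoc, mul_assoc]
      exact Nat.mul_lt_mul_of_pos_right (by omega) hpos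
    exact (hstep₁.trans hstep₂).trans_lt (hstep₃_lt.trans_le hstep₄)
  · have hstep₁_lt : n.choose r * (d ^ r * (d - 1) ^ (n - r)) <
        n.choose r * (2 ^ r * (d - 1) ^ n) :=
      Nat.mul_lt_mul_of_pos_left (pow_mul_sub_one_pow_lt (by omega) hr hrn) (choose_pos hrn)
    exact hstep₁_lt.trans_le (hstep₂.trans (hstep₃.trans hstep₄))

theorem mixedDiscrDegree_lt_iteratedDiscrDegree {d n r : ℕ} (hd : 2 ≤ d) (hr : 1 ≤ r)
    (hrn : r ≤ n) (hne : ¬(r = 1 ∧ d = 2)) :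
    mixedDiscrDegree d n r < iteratedDiscrDegree d n r :=
  calc mixedDiscrDegree d n r
    _ = (n + 1) * (n.choose r * (d ^ r * (d - 1) ^ (n - r))) := by
        simp only [mixedDiscrDegree]; ring
    _ < (n + 1) * ((d - 1) ^ n * (r + 1) * (discrDegree d n - 1) ^ r) :=
        Nat.mul_lt_mul_of_pos_left
          (choose_mul_pow_mul_sub_one_pow_lt hd hr hrn hne) (succ_pos n)
    _ = iteratedDiscrDegree d n r := by simp only [iteratedDiscrDegree, discrDegree]; ring

theorem mixedDiscrDegree_two_one (n : ℕ) :
    mixedDiscrDegree 2 n 1 = iteratedDiscrDegree 2 n 1 := by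
  simp only [mixedDiscrDegree, iteratedDiscrDegree, discrDegree, choose_one_right, pow_one,
    Nat.add_one_sub_one, one_pow, mul_one, add_tsub_cancel_right]
  ring

/-- For `d ≥ 2` and `1 ≤ r ≤ n`, the degree of the mixed discriminant
equals the degree of the iterated discriminant iff `r = 1` and `d = 2`. -/
theorem mixed_eq_iterated_iff (d n r : ℕ) (hd : 2 ≤ d) (hr : 1 ≤ r) (hrn : r ≤ n) :
    (n + 1) * n.choose r * d ^ r * (d - 1) ^ (n - r) =
      (n + 1) * (d - 1) ^ n * (r + 1) * ((n + 1) * (d - 1) ^ n - 1) ^ r ↔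
    r = 1 ∧ d = 2 := by
  change mixedDiscrDegree d n r = iteratedDiscrDegree d n r ↔ r = 1 ∧ d = 2
  refine ⟨fun h => ?_, ?_⟩
  · by_contra hne
    exact (mixedDiscrDegree_lt_iteratedDiscrDegree hd hr hrn hne).ne h
  · rintro ⟨rfl, rfl⟩
    exact mixedDiscrDegree_two_one n
end

section
/- For all integers d ≥ 2 and 1 ≤ r ≤ n, the ratio [(n+1)(d-1)^n(r+1)((n+1)(d-1)^n-1)^r] / [(n+1)·binom(n,r)·d^r·(d-1)^{n-r}] is at least ((d-1)^{n+1}/d)^r · (r+1)!. -/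
open Nat

theorem pow_succ_pow_mul_pow_sub {M : Type*} [Monoid M] (x : M) {n r : ℕ} (hrn : r ≤ n) :
    (x ^ (n + 1)) ^ r * x ^ (n - r) = x ^ n * (x ^ n) ^ r := by
  rw [← pow_mul, ← pow_mul, ← pow_add, ← pow_add]
  obtain ⟨k, rfl⟩ := Nat.exists_eq_add_of_le hrn
  rw [Nat.add_sub_cancel_left]
  ring_nf

theorem choose_mul_factorial_mul_pow_le {K : Type*} [Field K] [LinearOrder K]
    [IsStrictOrderedRing K] {x : K} (hx : 1 ≤ x) (n r : ℕ) :
    (n.choose r : K) * r ! * x ^ r ≤ ((n + 1) * x - 1) ^ r := by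
  have hchoose : (n.choose r : K) * r ! ≤ (n : K) ^ r :=
    (le_div_iff₀ (by positivity)).1 (choose_le_pow_div r n)
  calc (n.choose r : K) * r ! * x ^ r ≤ (n : K) ^ r * x ^ r := by gcongr
    _ = (n * x) ^ r := (mul_pow _ _ _).symm
    _ ≤ ((n + 1) * x - 1) ^ r := by gcongr; nlinarith [(n.cast_nonneg : (0 : K) ≤ n)]

theorem ratio_ge_general (d n r : ℕ) (hd : 2 ≤ d) (hrn : r ≤ n) :
    (((n : ℚ) + 1) * ((d : ℚ) - 1) ^ n * ((r : ℚ) + 1) *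
        (((n : ℚ) + 1) * ((d : ℚ) - 1) ^ n - 1) ^ r) /
      (((n : ℚ) + 1) * (n.choose r : ℚ) * (d : ℚ) ^ r * ((d : ℚ) - 1) ^ (n - r)) ≥
    (((d : ℚ) - 1) ^ (n + 1) / (d : ℚ)) ^ r * (Nat.factorial (r + 1) : ℚ) := by
  have hd' : (2 : ℚ) ≤ d := by exact_mod_cast hd
  set e : ℚ := d - 1
  have he : 1 ≤ e := by linarith
  have hC : (0 : ℚ) < n.choose r := by exact_mod_cast Nat.choose_pos hrn
  rw [ge_iff_le, le_div_iff₀ (by positivity)]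
  calc (e ^ (n + 1) / d) ^ r * ((r + 1)! : ℕ) * ((n + 1) * n.choose r * d ^ r * e ^ (n - r))
      = (n + 1) * (r + 1) * (n.choose r * r !) * ((e ^ (n + 1)) ^ r * e ^ (n - r)) := by
        rw [div_pow, Nat.factorial_succ]; push_cast; field_simp
    _ = (n + 1) * e ^ n * (r + 1) * (n.choose r * r ! * (e ^ n) ^ r) := by
        rw [pow_succ_pow_mul_pow_sub e hrn]; ring
    _ ≤ (n + 1) * e ^ n * (r + 1) * ((n + 1) * e ^ n - 1) ^ r := by
        gcongr
        exact choose_mul_factorial_mul_pow_le (one_le_pow₀ he) n r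

/-- Lower bound for the ratio `deg(ID)/deg(MD)` for `d ≥ 2`, `1 ≤ r ≤ n`. -/
theorem ratio_ge (d n r : ℕ) (hd : 2 ≤ d) (hr : 1 ≤ r) (hrn : r ≤ n) :
    (((n : ℚ) + 1) * ((d : ℚ) - 1) ^ n * ((r : ℚ) + 1) *
        (((n : ℚ) + 1) * ((d : ℚ) - 1) ^ n - 1) ^ r) /
      (((n : ℚ) + 1) * (n.choose r : ℚ) * (d : ℚ) ^ r * ((d : ℚ) - 1) ^ (n - r)) ≥
    (((d : ℚ) - 1) ^ (n + 1) / (d : ℚ)) ^ r * (Nat.factorial (r + 1) : ℚ) :=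
  ratio_ge_general d n r hd hrn
end
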